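/- Let E ∈ ℝ, κ > 0, z := E + iκ, and τ := Im √z > 0 (principal branch). Let C₀ := [−1/2, 1/2]³ be the closed unit cube centered at the origin. Then: (1) for every n ∈ ℤ³, every x ∈ n + C₀ with d(x) > 0, and every m ∈ ℤ³, |G₀(x, m; z)| ≤ (e^{(√3/2) τ}/(4π d(x))) e^{−τ ‖n−m‖}; and (2) for all n, m ∈ ℤ³, ∫_{C₀} |G₀(x+n, m; z)| dx ≤ 2π e^{(√3/2) τ} e^{−τ ‖n−m‖}. -/

import Mathlib

open MeasureTheory Complex

noncomputable section

/-- The lattice `ℤ³`. -/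
abbrev Z3 := Fin 3 → ℤ

/-- Euclidean three-space. -/
abbrev E3 := EuclideanSpace ℝ (Fin 3)

/-- The embedding of the lattice `ℤ³` into `ℝ³`. -/
def embZ (n : Z3) : E3 := WithLp.toLp 2 (fun i => (n i : ℝ))

/-- The free Green's function `G₀(x,y;z) = e^{i√z ‖x-y‖}/(4π‖x-y‖)`, with the principal
branch of the square root. -/
def G0 (z : ℂ) (x y : E3) : ℂ :=
  Complex.exp (Complex.I * (z ^ (1 / 2 : ℂ)) * (‖x - y‖ : ℝ)) / (4 * Real.pi * ‖x - y‖)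

/-- `d(x) = dist(x, ℤ³)`. -/
def dZ (x : E3) : ℝ := Metric.infDist x (Set.range embZ)

/-- The closed unit cube `C₀ = [−1/2,1/2]³` centered at the origin. -/
def cube : Set E3 := {x : E3 | ∀ i, x i ∈ Set.Icc (-(1 : ℝ) / 2) (1 / 2)}

lemma norm_G0 (z : ℂ) (x y : E3) :
    ‖G0 z x y‖ = Real.exp (-(z ^ (1 / 2 : ℂ)).im * ‖x - y‖) / (4 * Real.pi * ‖x - y‖) := by
  unfold G0
  rw [norm_div]
  congr 1
  · rw [Complex.norm_exp]
    congr 1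
    simp [Complex.mul_re, Complex.mul_im]
  · rw [show ((4 : ℂ) * Real.pi * (‖x - y‖ : ℝ)) = ((4 * Real.pi * ‖x - y‖ : ℝ) : ℂ) by
      push_cast; ring, Complex.norm_real, Real.norm_eq_abs,
      _root_.abs_of_nonneg (by positivity)]


lemma im_sqrt_pos (E κ : ℝ) (hκ : 0 < κ) : 0 < (((E : ℂ) + κ * Complex.I) ^ (1 / 2 : ℂ)).im := by
  have him : ((E : ℂ) + κ * Complex.I).im = κ := by simp
  have hz0 : ((E : ℂ) + κ * Complex.I) ≠ 0 := by
    intro h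
    rw [h] at him
    simp at him
    linarith
  set z : ℂ := (E : ℂ) + κ * Complex.I
  have habs : 0 < ‖z‖ := norm_pos_iff.mpr hz0
  have hsin : 0 < Real.sin z.arg := by
    rw [Complex.sin_arg, him]
    positivity
  have harg_pos : 0 < z.arg := by
    rcases lt_trichotomy z.arg 0 with h | h | h
    · exact absurd (Real.sin_neg_of_neg_of_neg_pi_lt h (Complex.neg_pi_lt_arg z)) (by linarith)
    · rw [h] at hsin; simp at hsin
    · exact h
  rw [Complex.cpow_def_of_ne_zero hz0, Complex.exp_im]
  have h1 : (Complex.log z * (1 / 2 : ℂ)).im = z.arg / 2 := by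
    simp [Complex.mul_im, Complex.log_im]
    ring
  rw [h1]
  have harg_le : z.arg ≤ Real.pi := Complex.arg_le_pi z
  have hs : 0 < Real.sin (z.arg / 2) :=
    Real.sin_pos_of_pos_of_lt_pi (by linarith) (by linarith [Real.pi_pos])
  positivity


lemma vol_ball3 (c : E3) (r : ℝ) (hr : 0 ≤ r) :
    volume (Metric.ball c r) = ENNReal.ofReal (4 / 3 * Real.pi * r ^ 3) := by
  rw [EuclideanSpace.volume_ball]
  have h32 : ((Fintype.card (Fin 3)) : ℝ) / 2 + 1 = 3 / 2 + 1 := by norm_num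
  have hG : Real.Gamma ((Fintype.card (Fin 3)) / 2 + 1) = 3 / 4 * Real.sqrt Real.pi := by
    rw [h32, show (3:ℝ)/2 + 1 = (1/2 + 1) + 1 by norm_num,
      Real.Gamma_add_one (by norm_num), Real.Gamma_add_one (by norm_num),
      Real.Gamma_one_half_eq]
    ring
  rw [hG]
  have hs : Real.sqrt Real.pi ≠ 0 := by positivity
  have hconst : Real.sqrt Real.pi ^ Fintype.card (Fin 3) / (3 / 4 * Real.sqrt Real.pi)
      = 4 / 3 * Real.pi := by
    rw [Fintype.card_fin, pow_succ, Real.sq_sqrt Real.pi_pos.le]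
    field_simp
  rw [hconst, Fintype.card_fin, ← ENNReal.ofReal_pow hr, ← ENNReal.ofReal_mul (by positivity)]
  ring_nf

lemma vol_closedBall3 (c : E3) (r : ℝ) (hr : 0 ≤ r) :
    volume (Metric.closedBall c r) = ENNReal.ofReal (4 / 3 * Real.pi * r ^ 3) := by
  rw [Measure.addHaar_closedBall_eq_addHaar_ball, vol_ball3 c r hr]


lemma ball_lintegral :
    ∫⁻ x in Metric.ball (0 : E3) (1 / 2), ENNReal.ofReal ‖x‖⁻¹ ≤ ENNReal.ofReal 6 := by
  set μ := volume.restrict (Metric.ball (0 : E3) (1 / 2)) with hμ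
  have key := lintegral_eq_lintegral_meas_le μ (f := fun x : E3 => ‖x‖⁻¹)
    (Filter.Eventually.of_forall fun x => by positivity)
    (measurable_norm.inv.aemeasurable)
  rw [show (∫⁻ x in Metric.ball (0 : E3) (1/2), ENNReal.ofReal ‖x‖⁻¹) =
    ∫⁻ x, ENNReal.ofReal ‖x‖⁻¹ ∂μ from rfl, key,
    ← Set.Ioc_union_Ioi_eq_Ioi (zero_le_one (α := ℝ)),
    lintegral_union measurableSet_Ioi (Set.Ioc_disjoint_Ioi le_rfl)]
  have hvol : volume (Metric.ball (0 : E3) (1 / 2)) ≤ 1 := by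
    rw [vol_ball3 _ _ (by norm_num)]
    rw [show (1 : ENNReal) = ENNReal.ofReal 1 by simp]
    apply ENNReal.ofReal_le_ofReal
    nlinarith [Real.pi_lt_d2]
  have h1 : (∫⁻ t in Set.Ioc (0:ℝ) 1, μ {a | t ≤ ‖a‖⁻¹}) ≤ ENNReal.ofReal 1 := by
    calc ∫⁻ t in Set.Ioc (0:ℝ) 1, μ {a | t ≤ ‖a‖⁻¹}
        ≤ ∫⁻ _t in Set.Ioc (0:ℝ) 1, 1 := by
          apply setLIntegral_mono measurable_const
          intro t _
          calc μ {a | t ≤ ‖a‖⁻¹} ≤ μ Set.univ := measure_mono (Set.subset_univ _)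
            _ = volume (Metric.ball (0 : E3) (1 / 2)) := by
                rw [hμ, Measure.restrict_apply MeasurableSet.univ, Set.univ_inter]
            _ ≤ 1 := hvol
      _ = volume (Set.Ioc (0:ℝ) 1) := by rw [setLIntegral_const, one_mul]
      _ = ENNReal.ofReal 1 := by rw [Real.volume_Ioc]; norm_num
  have h2 : (∫⁻ t in Set.Ioi (1:ℝ), μ {a | t ≤ ‖a‖⁻¹}) ≤ ENNReal.ofReal 5 := by
    have hb : ∀ t ∈ Set.Ioi (1:ℝ), μ {a | t ≤ ‖a‖⁻¹} ≤ ENNReal.ofReal (5 * (t ^ 2)⁻¹) := by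
      intro t ht
      have ht1 : (1:ℝ) < t := ht
      have ht0 : (0:ℝ) < t := by linarith
      have hsub : {a : E3 | t ≤ ‖a‖⁻¹} ⊆ Metric.closedBall 0 t⁻¹ := by
        intro a ha
        simp only [Set.mem_setOf_eq] at ha
        rw [Metric.mem_closedBall, dist_zero_right]
        rcases eq_or_lt_of_le (norm_nonneg a) with h | h
        · rw [← h]; positivity
        · exact ((le_inv_comm₀ ht0 h).mp ha)
      calc μ {a | t ≤ ‖a‖⁻¹} ≤ volume (Metric.closedBall (0:E3) t⁻¹) :=
            le_trans (Measure.restrict_le_self _) (measure_mono hsub)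
        _ = ENNReal.ofReal (4 / 3 * Real.pi * (t⁻¹) ^ 3) := vol_closedBall3 _ _ (by positivity)
        _ ≤ ENNReal.ofReal (5 * (t ^ 2)⁻¹) := by
            apply ENNReal.ofReal_le_ofReal
            have hti : t⁻¹ ≤ 1 := by rw [inv_le_one_iff₀]; right; linarith
            have htin : (0:ℝ) ≤ t⁻¹ := by positivity
            have e1 : (t⁻¹) ^ 3 ≤ (t ^ 2)⁻¹ := by
              rw [← inv_pow]
              exact pow_le_pow_of_le_one htin hti (by norm_num)
            nlinarith [Real.pi_lt_d2, Real.pi_pos, inv_nonneg.mpr (sq_nonneg t),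
              pow_nonneg htin 3]
    calc (∫⁻ t in Set.Ioi (1:ℝ), μ {a | t ≤ ‖a‖⁻¹})
        ≤ ∫⁻ t in Set.Ioi (1:ℝ), ENNReal.ofReal (5 * (t ^ 2)⁻¹) := by
          apply setLIntegral_mono
          · exact (measurable_const.mul ((measurable_id.pow_const 2).inv)).ennreal_ofReal
          · exact hb
      _ = ENNReal.ofReal (∫ t in Set.Ioi (1:ℝ), 5 * (t ^ 2)⁻¹) := by
          rw [ofReal_integral_eq_lintegral_ofReal]
          · apply Integrable.const_mul
            apply ((integrableOn_Ioi_rpow_of_lt (show (-2:ℝ) < -1 by norm_num) one_pos).congr_fun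
              _ measurableSet_Ioi)
            intro x hx
            have hx0 : (0:ℝ) < x := lt_trans one_pos hx
            show x ^ (-2:ℝ) = (x ^ 2)⁻¹
            rw [show (-2:ℝ) = -(2:ℕ) by norm_num, Real.rpow_neg hx0.le, Real.rpow_natCast]
          · filter_upwards [self_mem_ae_restrict measurableSet_Ioi] with t ht
            have : (0:ℝ) < t := lt_trans one_pos ht
            positivity
      _ = ENNReal.ofReal 5 := by
          rw [MeasureTheory.integral_const_mul]
          have : ∫ t in Set.Ioi (1:ℝ), (t ^ 2)⁻¹ = ∫ t in Set.Ioi (1:ℝ), t ^ (-2:ℝ) := by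
            apply setIntegral_congr_fun measurableSet_Ioi
            intro x hx
            have hx0 : (0:ℝ) < x := lt_trans one_pos hx
            show (x ^ 2)⁻¹ = x ^ (-2:ℝ)
            rw [show (-2:ℝ) = -(2:ℕ) by norm_num, Real.rpow_neg hx0.le, Real.rpow_natCast]
          rw [this, integral_Ioi_rpow_of_lt (by norm_num) one_pos]
          norm_num
  calc _ ≤ ENNReal.ofReal 1 + ENNReal.ofReal 5 := add_le_add h1 h2
    _ = ENNReal.ofReal 6 := by rw [← ENNReal.ofReal_add] <;> norm_num

lemma norm_le_of_mem_cube {x : E3} (hx : x ∈ cube) : ‖x‖ ≤ Real.sqrt 3 / 2 := by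
  have h2 : Real.sqrt (3 / 4) = Real.sqrt 3 / 2 := by
    rw [Real.sqrt_eq_iff_eq_sq (by norm_num) (by positivity), div_pow,
      Real.sq_sqrt (by norm_num : (0:ℝ) ≤ 3)]
    norm_num
  rw [← h2, EuclideanSpace.norm_eq]
  apply Real.sqrt_le_sqrt
  have hb : ∀ i, ‖x i‖ ^ 2 ≤ 1 / 4 := by
    intro i
    have h := hx i
    have habs : |x i| ≤ 1 / 2 := abs_le.mpr ⟨by linarith [h.1], h.2⟩
    rw [Real.norm_eq_abs]
    nlinarith [abs_nonneg (x i)]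
  calc ∑ i, ‖x i‖ ^ 2 ≤ ∑ _i : Fin 3, (1 / 4 : ℝ) := Finset.sum_le_sum fun i _ => hb i
    _ = 3 / 4 := by norm_num


lemma cube_vol_le : volume cube ≤ ENNReal.ofReal 5 := by
  have hsub : cube ⊆ Metric.closedBall (0 : E3) 1 := by
    intro x hx
    rw [Metric.mem_closedBall, dist_zero_right]
    calc ‖x‖ ≤ Real.sqrt 3 / 2 := norm_le_of_mem_cube hx
      _ ≤ 1 := by
        rw [div_le_one (by norm_num)]
        calc Real.sqrt 3 ≤ Real.sqrt 4 := Real.sqrt_le_sqrt (by norm_num)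
          _ = 2 := by
            rw [show (4:ℝ) = 2 ^ 2 by norm_num, Real.sqrt_sq (by norm_num)]
  calc volume cube ≤ volume (Metric.closedBall (0 : E3) 1) := measure_mono hsub
    _ = ENNReal.ofReal (4 / 3 * Real.pi * 1 ^ 3) := vol_closedBall3 _ _ zero_le_one
    _ ≤ ENNReal.ofReal 5 := by
        apply ENNReal.ofReal_le_ofReal
        nlinarith [Real.pi_lt_d2]


lemma cube_lintegral (k : E3) :
    ∫⁻ x in cube, ENNReal.ofReal ‖x - k‖⁻¹ ≤ ENNReal.ofReal 20 := by
  have hpt : ∀ x : E3, ENNReal.ofReal ‖x - k‖⁻¹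
      ≤ (Metric.ball k (1/2)).indicator (fun x => ENNReal.ofReal ‖x - k‖⁻¹) x
        + ENNReal.ofReal 2 := by
    intro x
    by_cases hx : x ∈ Metric.ball k (1/2)
    · rw [Set.indicator_of_mem hx]; exact le_self_add
    · rw [Set.indicator_of_notMem hx, zero_add]
      apply ENNReal.ofReal_le_ofReal
      have hd : (1/2 : ℝ) ≤ ‖x - k‖ := by
        rw [Metric.mem_ball, not_lt] at hx
        rwa [dist_eq_norm] at hx
      calc ‖x - k‖⁻¹ ≤ (1/2 : ℝ)⁻¹ := inv_anti₀ (by norm_num) hd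
        _ = 2 := by norm_num
  have htrans : ∫⁻ x in Metric.ball k (1/2), ENNReal.ofReal ‖x - k‖⁻¹
      = ∫⁻ x in Metric.ball (0 : E3) (1/2), ENNReal.ofReal ‖x‖⁻¹ := by
    rw [← lintegral_indicator measurableSet_ball,
        ← lintegral_indicator measurableSet_ball]
    rw [← lintegral_sub_right_eq_self
      (fun y => (Metric.ball (0:E3) (1/2)).indicator (fun y => ENNReal.ofReal ‖y‖⁻¹) y) k]
    congr 1
    ext x
    by_cases hx : x ∈ Metric.ball k (1/2)
    · have hx' : x - k ∈ Metric.ball (0 : E3) (1/2) := by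
        rw [Metric.mem_ball, dist_zero_right]
        rw [Metric.mem_ball, dist_eq_norm] at hx
        exact hx
      rw [Set.indicator_of_mem hx, Set.indicator_of_mem hx']
    · have hx' : x - k ∉ Metric.ball (0 : E3) (1/2) := by
        rw [Metric.mem_ball, dist_zero_right]
        rw [Metric.mem_ball, dist_eq_norm] at hx
        exact hx
      rw [Set.indicator_of_notMem hx, Set.indicator_of_notMem hx']
  calc ∫⁻ x in cube, ENNReal.ofReal ‖x - k‖⁻¹
      ≤ ∫⁻ x in cube, ((Metric.ball k (1/2)).indicator
          (fun x => ENNReal.ofReal ‖x - k‖⁻¹) x + ENNReal.ofReal 2) :=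
        lintegral_mono fun x => hpt x
    _ = (∫⁻ x in cube, (Metric.ball k (1/2)).indicator
          (fun x => ENNReal.ofReal ‖x - k‖⁻¹) x) + ENNReal.ofReal 2 * volume cube := by
        rw [lintegral_add_right _ measurable_const, setLIntegral_const]
    _ ≤ (∫⁻ x, (Metric.ball k (1/2)).indicator
          (fun x => ENNReal.ofReal ‖x - k‖⁻¹) x) + ENNReal.ofReal 2 * ENNReal.ofReal 5 := by
        gcongr
        · exact Measure.restrict_le_self
        · exact cube_vol_le
    _ = (∫⁻ x in Metric.ball k (1/2), ENNReal.ofReal ‖x - k‖⁻¹)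
          + ENNReal.ofReal 2 * ENNReal.ofReal 5 := by
        rw [lintegral_indicator measurableSet_ball]
    _ ≤ ENNReal.ofReal 6 + ENNReal.ofReal 2 * ENNReal.ofReal 5 := by
        rw [htrans]; gcongr; exact ball_lintegral
    _ ≤ ENNReal.ofReal 20 := by
        rw [← ENNReal.ofReal_mul (by norm_num), ← ENNReal.ofReal_add (by norm_num) (by norm_num)]
        norm_num

/-- with `z = E + iκ`, `κ > 0`, `τ = Im √z`: (1) for `x ∈ n + C₀` with
`d(x) > 0` and any `m ∈ ℤ³`, `|G₀(x,m;z)| ≤ (e^{(√3/2)τ}/(4π d(x))) e^{−τ‖n−m‖}`;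
(2) for all `n, m ∈ ℤ³`, `∫_{C₀} |G₀(x+n,m;z)| dx ≤ 2π e^{(√3/2)τ} e^{−τ‖n−m‖}`. -/
theorem free_greens_function_cube_bounds
    (E κ : ℝ) (hκ : 0 < κ) :
    (∀ n : Z3, ∀ x : E3, x - embZ n ∈ cube → 0 < dZ x → ∀ m : Z3,
      ‖G0 ((E : ℂ) + κ * Complex.I) x (embZ m)‖
        ≤ Real.exp (Real.sqrt 3 / 2 * ((((E : ℂ) + κ * Complex.I) ^ (1 / 2 : ℂ)).im)) /
            (4 * Real.pi * dZ x) *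
          Real.exp (-((((E : ℂ) + κ * Complex.I) ^ (1 / 2 : ℂ)).im) * ‖embZ n - embZ m‖)) ∧
    (∀ n m : Z3,
      (∫⁻ x in cube,
          ENNReal.ofReal ‖G0 ((E : ℂ) + κ * Complex.I) (x + embZ n) (embZ m)‖)
        ≤ ENNReal.ofReal
            (2 * Real.pi *
              Real.exp (Real.sqrt 3 / 2 * ((((E : ℂ) + κ * Complex.I) ^ (1 / 2 : ℂ)).im)) *
              Real.exp
                (-((((E : ℂ) + κ * Complex.I) ^ (1 / 2 : ℂ)).im) * ‖embZ n - embZ m‖))) := by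
  set z : ℂ := (E : ℂ) + κ * Complex.I with hz
  set τ : ℝ := (z ^ (1 / 2 : ℂ)).im with hτ
  have hτ0 : 0 < τ := im_sqrt_pos E κ hκ
  constructor
  · intro n x hx hd m
    set N := ‖embZ n - embZ m‖ with hN
    have hN0 : 0 ≤ N := norm_nonneg _
    have hdr : dZ x ≤ ‖x - embZ m‖ := by
      rw [show ‖x - embZ m‖ = dist x (embZ m) from (dist_eq_norm _ _).symm]
      exact Metric.infDist_le_dist_of_mem ⟨m, rfl⟩
    have hr0 : 0 < ‖x - embZ m‖ := lt_of_lt_of_le hd hdr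
    have htri : N ≤ Real.sqrt 3 / 2 + ‖x - embZ m‖ := by
      have h1 : ‖x - embZ n‖ ≤ Real.sqrt 3 / 2 := norm_le_of_mem_cube hx
      calc N = ‖(x - embZ m) - (x - embZ n)‖ := by rw [hN]; congr 1; abel
        _ ≤ ‖x - embZ m‖ + ‖x - embZ n‖ := norm_sub_le _ _
        _ ≤ Real.sqrt 3 / 2 + ‖x - embZ m‖ := by linarith
    rw [norm_G0]
    have hexp : Real.exp (-τ * ‖x - embZ m‖)
        ≤ Real.exp (Real.sqrt 3 / 2 * τ) * Real.exp (-τ * N) := by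
      rw [← Real.exp_add]
      apply Real.exp_le_exp.mpr
      nlinarith
    calc Real.exp (-τ * ‖x - embZ m‖) / (4 * Real.pi * ‖x - embZ m‖)
        ≤ (Real.exp (Real.sqrt 3 / 2 * τ) * Real.exp (-τ * N)) / (4 * Real.pi * dZ x) := by
          apply div_le_div₀ (by positivity) hexp (by positivity)
          have : (0:ℝ) < 4 * Real.pi := by positivity
          nlinarith [Real.pi_pos]
      _ = Real.exp (Real.sqrt 3 / 2 * τ) / (4 * Real.pi * dZ x) * Real.exp (-τ * N) := by
          ring
  · intro n m
    set N := ‖embZ n - embZ m‖ with hN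
    have hN0 : 0 ≤ N := norm_nonneg _
    set k : E3 := embZ m - embZ n with hk
    set c : ℝ := Real.exp (Real.sqrt 3 / 2 * τ) * Real.exp (-τ * N) with hc
    have hc0 : 0 < c := by positivity
    have hpt : ∀ x ∈ cube, ‖G0 z (x + embZ n) (embZ m)‖ ≤ c / (4 * Real.pi) * ‖x - k‖⁻¹ := by
      intro x hx
      have hxk : x + embZ n - embZ m = x - k := by rw [hk]; abel
      rw [norm_G0, hxk]
      rcases eq_or_lt_of_le (norm_nonneg (x - k)) with hR | hR
      · rw [← hR]
        simp
      · have hxn : ‖x‖ ≤ Real.sqrt 3 / 2 := norm_le_of_mem_cube hx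
        have htri : N ≤ Real.sqrt 3 / 2 + ‖x - k‖ := by
          calc N = ‖(x - k) - x‖ := by rw [hN, hk]; congr 1; abel
            _ ≤ ‖x - k‖ + ‖x‖ := norm_sub_le _ _
            _ ≤ Real.sqrt 3 / 2 + ‖x - k‖ := by linarith
        have hexp : Real.exp (-τ * ‖x - k‖) ≤ c := by
          rw [hc, ← Real.exp_add]
          apply Real.exp_le_exp.mpr
          nlinarith
        calc Real.exp (-τ * ‖x - k‖) / (4 * Real.pi * ‖x - k‖)
            ≤ c / (4 * Real.pi * ‖x - k‖) := by
              apply div_le_div₀ hc0.le hexp (by positivity) le_rfl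
          _ = c / (4 * Real.pi) * ‖x - k‖⁻¹ := by
              field_simp
    have hmeas : Measurable fun x : E3 => ENNReal.ofReal (c / (4 * Real.pi) * ‖x - k‖⁻¹) :=
      ((measurable_const.mul ((measurable_id.sub measurable_const).norm.inv))).ennreal_ofReal
    calc ∫⁻ x in cube, ENNReal.ofReal ‖G0 z (x + embZ n) (embZ m)‖
        ≤ ∫⁻ x in cube, ENNReal.ofReal (c / (4 * Real.pi) * ‖x - k‖⁻¹) := by
          apply setLIntegral_mono hmeas
          intro x hx
          exact ENNReal.ofReal_le_ofReal (hpt x hx)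
      _ = ENNReal.ofReal (c / (4 * Real.pi)) * ∫⁻ x in cube, ENNReal.ofReal ‖x - k‖⁻¹ := by
          simp_rw [ENNReal.ofReal_mul (by positivity : (0:ℝ) ≤ c / (4 * Real.pi))]
          rw [lintegral_const_mul' _ _ ENNReal.ofReal_ne_top]
      _ ≤ ENNReal.ofReal (c / (4 * Real.pi)) * ENNReal.ofReal 20 := by
          gcongr
          exact cube_lintegral k
      _ ≤ ENNReal.ofReal (2 * Real.pi * Real.exp (Real.sqrt 3 / 2 * τ) * Real.exp (-τ * N)) := by
          rw [← ENNReal.ofReal_mul (by positivity)]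
          apply ENNReal.ofReal_le_ofReal
          rw [show 2 * Real.pi * Real.exp (Real.sqrt 3 / 2 * τ) * Real.exp (-τ * N)
            = 2 * Real.pi * c by rw [hc]; ring]
          rw [div_mul_eq_mul_div, div_le_iff₀ (by positivity)]
          have h1 : (20:ℝ) ≤ 8 * Real.pi ^ 2 := by nlinarith [Real.pi_gt_three]
          nlinarith [mul_le_mul_of_nonneg_left h1 hc0.le]
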